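/- Let X be a regular topological space. Then the Lindelöf degree of X is at most the tightness of Q_P(X): L(X) ≤ t(Q_P(X)). -/

import Mathlib

open Cardinal

universe u v w

/-- A function between topological spaces is quasi-continuous if for every point `x` and
all open sets `U ∋ x` and `V ∋ f x` there is a nonempty open `G ⊆ U` with `f '' G ⊆ V`. -/
def QuasiContinuous {X Y : Type*} [TopologicalSpace X] [TopologicalSpace Y] (f : X → Y) : Prop :=
  ∀ x : X, ∀ U : Set X, IsOpen U → x ∈ U → ∀ V : Set Y, IsOpen V → f x ∈ V →
    ∃ G : Set X, IsOpen G ∧ G.Nonempty ∧ G ⊆ U ∧ f '' G ⊆ V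

/-- `QP X Y` : the quasi-continuous functions from `X` to `Y`, topologized as a subspace of
the product topology on `X → Y` (topology of pointwise convergence). -/
abbrev QP (X Y : Type*) [TopologicalSpace X] [TopologicalSpace Y] :=
  {f : X → Y // QuasiContinuous f}

/-- `CP X Y` : the continuous functions from `X` to `Y` with the topology of
pointwise convergence. -/
abbrev CP (X Y : Type*) [TopologicalSpace X] [TopologicalSpace Y] :=
  {f : X → Y // Continuous f}

/-- The weight of a topological space: `ℵ₀ +` the least cardinality of a basis. -/
noncomputable def weight (Z : Type u) [TopologicalSpace Z] : Cardinal.{u} :=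
  ℵ₀ + sInf {c | ∃ B : Set (Set Z), TopologicalSpace.IsTopologicalBasis B ∧ #B = c}

/-- A network of a space: a family of (arbitrary) subsets such that every open `U ∋ z`
contains some member of the family containing `z`. -/
def IsNetwork {Z : Type u} [TopologicalSpace Z] (N : Set (Set Z)) : Prop :=
  ∀ z : Z, ∀ U : Set Z, IsOpen U → z ∈ U → ∃ A ∈ N, z ∈ A ∧ A ⊆ U

/-- Network weight: `ℵ₀ +` the least cardinality of a network. -/
noncomputable def netWeight (Z : Type u) [TopologicalSpace Z] : Cardinal.{u} :=
  ℵ₀ + sInf {c | ∃ N : Set (Set Z), IsNetwork N ∧ #N = c}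

/-- Density: `ℵ₀ +` the least cardinality of a dense subset. -/
noncomputable def density (Z : Type u) [TopologicalSpace Z] : Cardinal.{u} :=
  ℵ₀ + sInf {c | ∃ D : Set Z, Dense D ∧ #D = c}

/-- Lindelöf degree: `ℵ₀ +` the least cardinal `η` such that every open cover has a
subcover of cardinality at most `η`. -/
noncomputable def lindelofDegree (X : Type u) [TopologicalSpace X] : Cardinal.{u} :=
  ℵ₀ + sInf {η | ∀ V : Set (Set X), (∀ U ∈ V, IsOpen U) → ⋃₀ V = Set.univ →
      ∃ W ⊆ V, #W ≤ η ∧ ⋃₀ W = Set.univ}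

/-- Tightness: `ℵ₀ +` the least cardinal `η` such that whenever `z ∈ closure A` there is
`B ⊆ A` with `#B ≤ η` and `z ∈ closure B`. -/
noncomputable def tightness (Z : Type u) [TopologicalSpace Z] : Cardinal.{u} :=
  ℵ₀ + sInf {η | ∀ z : Z, ∀ A : Set Z, z ∈ closure A →
      ∃ B ⊆ A, #B ≤ η ∧ z ∈ closure B}

/-- Pseudocharacter of a space: the sup over points `z` of `ℵ₀ +` the least cardinality of a
family of open sets whose intersection is `{z}`. -/
noncomputable def pseudoChar (Z : Type u) [TopologicalSpace Z] : Cardinal.{u} :=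
  ⨆ z : Z, (ℵ₀ + sInf {c | ∃ γ : Set (Set Z), (∀ U ∈ γ, IsOpen U) ∧ ⋂₀ γ = {z} ∧ #γ = c})

/-- Weak covering number: `ℵ₀ +` the least cardinality of a family of open sets whose union
is dense. -/
noncomputable def weakCov (X : Type u) [TopologicalSpace X] : Cardinal.{u} :=
  ℵ₀ + sInf {c | ∃ J : Set (Set X), (∀ U ∈ J, IsOpen U) ∧ closure (⋃₀ J) = Set.univ ∧ #J = c}

/-- Cardinal logarithm: the least `μ` with `κ ≤ 2 ^ μ`. -/
noncomputable def cardLog (κ : Cardinal.{u}) : Cardinal.{u} :=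
  sInf {μ | κ ≤ 2 ^ μ}

/-- i-weight: `ℵ₀ +` the least weight of a space onto which `Z` admits a continuous
bijection. -/
noncomputable def iWeight (Z : Type u) [TopologicalSpace Z] : Cardinal.{u} :=
  ℵ₀ + sInf {c | ∃ (W : Type u) (_ : TopologicalSpace W) (f : Z → W),
      Continuous f ∧ Function.Bijective f ∧ weight W = c}

section Aux

variable {X : Type u} [TopologicalSpace X]

lemma qc_zero : QuasiContinuous (fun _ : X => (0 : ℝ)) := by
  intro x U hU hxU V hV hxV
  exact ⟨U, hU, ⟨x, hxU⟩, le_refl U, by rintro y ⟨g, _, rfl⟩; exact hxV⟩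

lemma qc_indicator (W : Set X) (hW : IsOpen W) :
    QuasiContinuous (Set.indicator (closure W)ᶜ (fun _ : X => (1 : ℝ))) := by
  intro x U hU hxU V hV hxV
  by_cases hx : x ∈ (closure W)ᶜ
  · refine ⟨U ∩ (closure W)ᶜ, hU.inter isClosed_closure.isOpen_compl,
      ⟨x, hxU, hx⟩, Set.inter_subset_left, ?_⟩
    rintro y ⟨g, ⟨_, hg2⟩, rfl⟩
    have h1 : Set.indicator (closure W)ᶜ (fun _ : X => (1 : ℝ)) g = 1 :=
      Set.indicator_of_mem hg2 _
    have h2 : Set.indicator (closure W)ᶜ (fun _ : X => (1 : ℝ)) x = 1 :=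
      Set.indicator_of_mem hx _
    rw [h1, ← h2]; exact hxV
  · have hxW : x ∈ closure W := not_not.mp hx
    have hne : (U ∩ W).Nonempty := by
      have := mem_closure_iff.mp hxW U hU hxU
      exact this
    refine ⟨U ∩ W, hU.inter hW, hne, Set.inter_subset_left, ?_⟩
    rintro y ⟨g, ⟨_, hg2⟩, rfl⟩
    have hg : g ∉ (closure W)ᶜ := fun h => h (subset_closure hg2)
    have h1 : Set.indicator (closure W)ᶜ (fun _ : X => (1 : ℝ)) g = 0 :=
      Set.indicator_of_notMem hg _
    have h2 : Set.indicator (closure W)ᶜ (fun _ : X => (1 : ℝ)) x = 0 :=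
      Set.indicator_of_notMem hx _
    rw [h1, ← h2]; exact hxV

end Aux

lemma lindelof_key (X : Type u) [TopologicalSpace X] [RegularSpace X] (η : Cardinal.{u})
    (hη : ℵ₀ ≤ η)
    (ht : ∀ z : QP X ℝ, ∀ A : Set (QP X ℝ), z ∈ closure A →
      ∃ B ⊆ A, #B ≤ η ∧ z ∈ closure B) :
    ∀ V : Set (Set X), (∀ U ∈ V, IsOpen U) → ⋃₀ V = Set.univ →
      ∃ W ⊆ V, #W ≤ η ∧ ⋃₀ W = Set.univ := by
  intro γ hγopen hγcov
  let ι := {V : Set X // IsOpen V ∧ ∃ U ∈ γ, closure V ⊆ U}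
  have hcov : ∀ x : X, ∃ V : ι, x ∈ (V : Set X) := by
    intro x
    have hx : x ∈ ⋃₀ γ := by rw [hγcov]; trivial
    obtain ⟨U, hUγ, hxU⟩ := hx
    obtain ⟨C, hC, hCcl, hCU⟩ :=
      exists_mem_nhds_isClosed_subset ((hγopen U hUγ).mem_nhds hxU)
    exact ⟨⟨interior C, isOpen_interior,
      ⟨U, hUγ, (closure_minimal interior_subset hCcl).trans hCU⟩⟩,
      mem_interior_iff_mem_nhds.mpr hC⟩
  let Wof : Finset ι → Set X := fun μ => ⋃ i ∈ μ, (i : Set X)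
  have hWopen : ∀ μ, IsOpen (Wof μ) := fun μ => isOpen_biUnion fun i _ => i.2.1
  let F : Finset ι → QP X ℝ := fun μ =>
    ⟨Set.indicator (closure (Wof μ))ᶜ (fun _ => 1), qc_indicator _ (hWopen μ)⟩
  let z : QP X ℝ := ⟨fun _ => 0, qc_zero⟩
  have htend : Filter.Tendsto F Filter.atTop (nhds z) := by
    refine tendsto_subtype_rng.mpr (tendsto_pi_nhds.mpr fun x => ?_)
    obtain ⟨V₀, hV₀⟩ := hcov x
    refine Filter.Tendsto.congr' ?_ tendsto_const_nhds
    filter_upwards [Filter.eventually_ge_atTop ({V₀} : Finset ι)] with μ hμ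
    have hV₀μ : V₀ ∈ μ := hμ (Finset.mem_singleton_self V₀)
    have hx : x ∈ closure (Wof μ) := subset_closure (Set.mem_biUnion hV₀μ hV₀)
    exact (Set.indicator_of_notMem (Set.notMem_compl_iff.mpr hx) (fun _ : X => (1 : ℝ))).symm
  have hzA : z ∈ closure (Set.range F) :=
    mem_closure_of_tendsto htend (Filter.Eventually.of_forall fun μ => Set.mem_range_self μ)
  obtain ⟨B, hBA, hBcard, hzB⟩ := ht z (Set.range F) hzA
  have hchoice : ∀ b : B, ∃ μ, F μ = (b : QP X ℝ) := fun b => hBA b.2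
  choose μof hμof using hchoice
  let T : Set ι := ⋃ b : B, ↑(μof b)
  choose Uof hUofγ hUofsub using fun i : ι => i.2.2
  refine ⟨Uof '' T, ?_, ?_, ?_⟩
  · rintro _ ⟨i, _, rfl⟩; exact hUofγ i
  · refine Cardinal.mk_image_le.trans ((Cardinal.mk_iUnion_le _).trans ?_)
    have h2 : ⨆ b : B, #(↑(μof b) : Set ι) ≤ ℵ₀ :=
      ciSup_le' fun b => le_of_lt (Cardinal.lt_aleph0_of_finite _)
    calc #B * ⨆ b : B, #(↑(μof b) : Set ι) ≤ η * ℵ₀ := mul_le_mul' hBcard h2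
      _ = η := Cardinal.mul_eq_left hη hη Cardinal.aleph0_ne_zero
  · refine Set.eq_univ_of_forall fun x => ?_
    have hOopen : IsOpen ((fun g : QP X ℝ => (g : X → ℝ) x) ⁻¹' Metric.ball 0 1) :=
      Metric.isOpen_ball.preimage ((continuous_apply x).comp continuous_subtype_val)
    have hzO : z ∈ (fun g : QP X ℝ => (g : X → ℝ) x) ⁻¹' Metric.ball 0 1 := by
      simp [z, Metric.mem_ball]
    obtain ⟨b, hbO, hbB⟩ := mem_closure_iff.mp hzB _ hOopen hzO
    have hF : F (μof ⟨b, hbB⟩) = b := hμof ⟨b, hbB⟩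
    have hx1 : ((b : QP X ℝ) : X → ℝ) x ∈ Metric.ball (0 : ℝ) 1 := hbO
    rw [← hF] at hx1
    have hxcl : x ∈ closure (Wof (μof ⟨b, hbB⟩)) := by
      by_contra h
      have h1 : ((F (μof ⟨b, hbB⟩) : QP X ℝ) : X → ℝ) x = 1 := by
        show Set.indicator (closure (Wof (μof ⟨b, hbB⟩)))ᶜ (fun _ => (1 : ℝ)) x = 1
        exact Set.indicator_of_mem (Set.mem_compl h) _
      rw [h1] at hx1
      simp [Metric.mem_ball] at hx1
    have hclU : closure (Wof (μof ⟨b, hbB⟩)) = ⋃ i ∈ μof ⟨b, hbB⟩, closure (i : Set X) :=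
      Finset.closure_biUnion _ _
    rw [hclU] at hxcl
    obtain ⟨i, hiμ, hxi⟩ := Set.mem_iUnion₂.mp hxcl
    exact ⟨Uof i, ⟨i, Set.mem_iUnion.mpr ⟨⟨b, hbB⟩, hiμ⟩, rfl⟩, hUofsub i hxi⟩

/-- For a regular space `X`, `L(X) ≤ t(Q_P(X))`. -/
theorem stmt1 (X : Type u) [TopologicalSpace X] [RegularSpace X] :
    lindelofDegree X ≤ tightness (QP X ℝ) := by
  set S : Set Cardinal.{u} := {η | ∀ z : QP X ℝ, ∀ A : Set (QP X ℝ), z ∈ closure A →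
      ∃ B ⊆ A, #B ≤ η ∧ z ∈ closure B} with hS
  have hne : S.Nonempty :=
    ⟨#(QP X ℝ), fun z A hz => ⟨A, subset_rfl, Cardinal.mk_set_le A, hz⟩⟩
  have h₀ : sInf S ∈ S := csInf_mem hne
  have hη : ℵ₀ ≤ ℵ₀ + sInf S := self_le_add_right ℵ₀ (sInf S)
  have ht : ∀ z : QP X ℝ, ∀ A : Set (QP X ℝ), z ∈ closure A →
      ∃ B ⊆ A, #B ≤ ℵ₀ + sInf S ∧ z ∈ closure B := by
    intro z A hz
    obtain ⟨B, h1, h2, h3⟩ := h₀ z A hz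
    exact ⟨B, h1, h2.trans (self_le_add_left _ ℵ₀), h3⟩
  have hkey := lindelof_key X (ℵ₀ + sInf S) hη ht
  have hle : sInf {η | ∀ V : Set (Set X), (∀ U ∈ V, IsOpen U) → ⋃₀ V = Set.univ →
      ∃ W ⊆ V, #W ≤ η ∧ ⋃₀ W = Set.univ} ≤ ℵ₀ + sInf S := csInf_le' hkey
  show ℵ₀ + _ ≤ ℵ₀ + _
  calc ℵ₀ + _ ≤ ℵ₀ + (ℵ₀ + sInf S) := add_le_add_right hle ℵ₀
    _ = ℵ₀ + sInf S := by rw [← add_assoc, Cardinal.aleph0_add_aleph0]
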